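/- There exists a universal constant C > 0 with the following property. Let w ∈ ℝ^n, let z be a real random variable with E[z²] < ∞, and suppose the additive noise mechanism M(x) := wᵀx + z (for x ∈ ℝ^n) is (ε,δ)-differentially private for some 0 < ε ≤ 1/2 and 0 ≤ δ ≤ 1. Then (E[z²])^{1/2} ≥ (1 − δ') · ‖w‖_∞ / (C ε), where δ' = (e^{1/2} − 1) δ / (e^ε − 1). -/

import Mathlib

open MeasureTheory Matrix
open scoped ENNReal

noncomputable section

namespace DPPaper

variable {ι κ : Type*}

/-- Two inputs `x, x' : ι → ℝ` are neighboring if `‖x - x'‖₁ ≤ 1`. -/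
def Neighboring [Fintype ι] (x x' : ι → ℝ) : Prop :=
  ∑ i, |x i - x' i| ≤ 1

/-- A mechanism `M` (a map from inputs to probability measures on an output space `Ω`)
is `(ε,δ)`-differentially private if for all neighboring inputs and all measurable sets `S`,
`M x S ≤ e^ε · M x' S + δ`. -/
def IsDP [Fintype ι] {Ω : Type*} [MeasurableSpace Ω]
    (M : (ι → ℝ) → Measure Ω) (ε δ : ℝ) : Prop :=
  ∀ x x' : ι → ℝ, Neighboring x x' → ∀ S : Set Ω, MeasurableSet S →
    M x S ≤ ENNReal.ofReal (Real.exp ε) * M x' S + ENNReal.ofReal δ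

/-- The `ℓ_p^p`-error of a mechanism `M` on the query matrix `A`:
`sup_x (E_{Y ~ M x} [ ‖Y - A x‖_p^p ])^{1/p}`, valued in `ℝ≥0∞`. -/
def errLp [Fintype ι] [Fintype κ] (M : (ι → ℝ) → Measure (κ → ℝ))
    (A : Matrix κ ι ℝ) (p : ℝ) : ℝ≥0∞ :=
  ⨆ x : ι → ℝ,
    (∫⁻ y, ENNReal.ofReal (∑ i, |y i - A.mulVec x i| ^ p) ∂(M x)) ^ (1 / p)

/-- The `q`-trace of a square matrix: `(∑ i, U i i ^ q)^{1/q}`. -/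
def trq [Fintype κ] (q : ℝ) (U : Matrix κ κ ℝ) : ℝ :=
  (∑ i, (U i i) ^ q) ^ (1 / q)

/-- The `1 → 2` operator norm of a matrix: the largest `ℓ₂`-norm of a column. -/
def norm12 [Fintype ι] [Fintype κ] (R : Matrix κ ι ℝ) : ℝ :=
  ⨆ j : ι, Real.sqrt (∑ i, (R i j) ^ 2)

/-- The factorization norm `γ_{(p)}(A)`. -/
def gammaP [Fintype ι] [Fintype κ] (p : ℝ) (A : Matrix κ ι ℝ) : ℝ :=
  sInf { c : ℝ | ∃ (k : ℕ) (L : Matrix κ (Fin k) ℝ) (R : Matrix (Fin k) ι ℝ),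
    L * R = A ∧ c = Real.sqrt (trq (p / 2) (L * Lᵀ)) * norm12 R }

/-- The Schatten-1 norm of a matrix: the trace of the PSD square root of `Aᵀ * A`,
i.e. the sum of the singular values of `A`. -/
def schatten1 [Fintype ι] [Fintype κ] [DecidableEq ι] (A : Matrix κ ι ℝ) : ℝ :=
  (((Matrix.posSemidef_conjTranspose_mul_self A).1.eigenvectorUnitary : Matrix ι ι ℝ) *
    diagonal ((RCLike.ofReal : ℝ → ℝ) ∘ Real.sqrt ∘
      (Matrix.posSemidef_conjTranspose_mul_self A).1.eigenvalues) *
    (star (Matrix.posSemidef_conjTranspose_mul_self A).1.eigenvectorUnitary : Matrix ι ι ℝ)).trace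

/-- The sensitivity polytope `A B₁^n = {A x : ‖x‖₁ ≤ 1}`. -/
def sensPolytope [Fintype ι] (A : Matrix κ ι ℝ) : Set (κ → ℝ) :=
  {v | ∃ x : ι → ℝ, (∑ i, |x i|) ≤ 1 ∧ v = A.mulVec x}

/-- The width of a set `K` in direction `θ`. -/
def width [Fintype κ] (K : Set (κ → ℝ)) (θ : κ → ℝ) : ℝ :=
  sSup ((fun v => ∑ i, θ i * v i) '' K) - sInf ((fun v => ∑ i, θ i * v i) '' K)

/-- `κ(A)`: the minimal width of the sensitivity polytope over all unit directions. -/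
def kappa [Fintype ι] [Fintype κ] (A : Matrix κ ι ℝ) : ℝ :=
  sInf { c : ℝ | ∃ θ : κ → ℝ, (∑ i, (θ i) ^ 2) = 1 ∧ c = width (sensPolytope A) θ }

/-- The prefix-sum (continual counting) matrix: lower-triangular all ones. -/
def Aprefix (n : ℕ) : Matrix (Fin n) (Fin n) ℝ :=
  fun i j => if j ≤ i then 1 else 0

/-- The covariance matrix of a measure on `κ → ℝ`. -/
def covMatrix [Fintype κ] (μ : Measure (κ → ℝ)) : Matrix κ κ ℝ :=
  fun i j => ∫ y, (y i - ∫ y', y' i ∂μ) * (y j - ∫ y', y' j ∂μ) ∂μ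

/-- The parity query matrix `Q_{d,w}`: rows indexed by `w`-element subsets `P` of `{1,…,d}`,
columns indexed by points of `{-1,1}^d` (encoded as `Fin d → Bool`), entry `∏_{i ∈ P} x_i`. -/
def parityMatrix (d w : ℕ) : Matrix {P : Finset (Fin d) // P.card = w} (Fin d → Bool) ℝ :=
  fun P b => ∏ i ∈ P.1, (if b i then (1 : ℝ) else -1)

/-- The Hadamard matrices: `H_0 = [1]`, `H_{d+1} = [[H_d, H_d], [H_d, -H_d]]`. -/
def Hadamard : (d : ℕ) → Matrix (Fin (2 ^ d)) (Fin (2 ^ d)) ℝ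
  | 0 => fun _ _ => 1
  | (d + 1) =>
    Matrix.reindex
      (finSumFinEquiv.trans (finCongr (by rw [pow_succ, mul_two])))
      (finSumFinEquiv.trans (finCongr (by rw [pow_succ, mul_two])))
      (Matrix.fromBlocks (Hadamard d) (Hadamard d) (Hadamard d) (-(Hadamard d)))

end DPPaper

open DPPaper
/-!
Move a single coordinate `x_j`, where `|w_j| = ‖w‖_∞`, in `k = ⌊1/(2ε)⌋` unit steps. Group
privacy along this path compares the mass that `z` puts on a window `[-T, T]` with the mass it
puts on the same window translated by `k w_j`; for `T = k |w_j| / 2` Chebyshev's inequality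
makes the first mass at least `1 - E[z²]/T²` and the second at most `E[z²]/T²`, while
`e^{kε} ≤ e^{1/2}` and the accumulated `δ`-terms sum to at most `δ'`.
-/

open Finset

lemma le_pow_mul_add_geom_sum_mul {R : Type*} [Semiring R] [PartialOrder R] [IsOrderedRing R]
    {E d : R} (hE : 0 ≤ E) {q : ℕ → R} (hq : ∀ t, q t ≤ E * q (t + 1) + d) (k : ℕ) :
    q 0 ≤ E ^ k * q k + (∑ i ∈ range k, E ^ i) * d := by
  induction k with
  | zero => simp
  | succ k ih =>
    calc q 0 ≤ E ^ k * q k + (∑ i ∈ range k, E ^ i) * d := ih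
      _ ≤ E ^ k * (E * q (k + 1) + d) + (∑ i ∈ range k, E ^ i) * d := by
        gcongr; exact hq k
      _ = E ^ (k + 1) * q (k + 1) + (∑ i ∈ range (k + 1), E ^ i) * d := by
        rw [sum_range_succ, mul_add, ← mul_assoc, ← pow_succ, add_mul, add_assoc,
          add_comm (E ^ k * d)]

lemma geom_sum_exp_le_of_mul_le {ε c : ℝ} (hε : 0 < ε) {k : ℕ} (hk : k * ε ≤ c) :
    ∑ i ∈ range k, Real.exp ε ^ i ≤ (Real.exp c - 1) / (Real.exp ε - 1) := by
  have hε' : 0 < Real.exp ε - 1 := by linarith [Real.add_one_lt_exp hε.ne']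
  rw [geom_sum_eq (by linarith), ← Real.exp_nat_mul]
  gcongr

lemma Nat.div_four_le_floor_inv_two_mul {ε : ℝ} (hε : 0 < ε) (hε2 : ε ≤ 1 / 2) :
    1 / (4 * ε) ≤ ⌊1 / (2 * ε)⌋₊ := by
  have h1 : 1 ≤ 1 / (2 * ε) := by rw [le_div_iff₀ (by positivity)]; linarith
  have := Nat.div_two_lt_floor h1
  calc 1 / (4 * ε) = 1 / (2 * ε) / 2 := by field_simp; ring
    _ ≤ _ := this.le

lemma Nat.floor_inv_two_mul_mul_le {ε : ℝ} (hε : 0 < ε) : ⌊1 / (2 * ε)⌋₊ * ε ≤ 1 / 2 :=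
  calc ⌊1 / (2 * ε)⌋₊ * ε ≤ 1 / (2 * ε) * ε := by gcongr; exact Nat.floor_le (by positivity)
    _ = 1 / 2 := by field_simp

lemma sq_mul_measureReal_le_integral_sq {ν : Measure ℝ} [IsFiniteMeasure ν]
    (hint : Integrable (fun z => z ^ 2) ν) {T : ℝ} (hT : 0 ≤ T) {S : Set ℝ}
    (hS : S ⊆ {z | T ≤ |z|}) : T ^ 2 * ν.real S ≤ ∫ z, z ^ 2 ∂ν := by
  have hsub : S ⊆ {z | T ^ 2 ≤ z ^ 2} := fun z hz => by
    simpa [sq_abs] using pow_le_pow_left₀ hT (hS hz) 2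
  calc T ^ 2 * ν.real S ≤ T ^ 2 * ν.real {z | T ^ 2 ≤ z ^ 2} :=
        mul_le_mul_of_nonneg_left (measureReal_mono hsub) (sq_nonneg T)
    _ ≤ ∫ z, z ^ 2 ∂ν :=
        mul_meas_ge_le_integral_of_nonneg (ae_of_all _ fun z => sq_nonneg z) hint _

lemma DPPaper.IsDP.measure_preimage_add_le {ι : Type*} [Fintype ι] {w : ι → ℝ}
    {ν : Measure ℝ} {ε δ : ℝ}
    (hDP : IsDP (fun x : ι → ℝ => ν.map (fun z => (∑ i, w i * x i) + z)) ε δ) (j : ι)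
    {s t : ℝ} (hst : |s - t| ≤ 1) {S : Set ℝ} (hS : MeasurableSet S) :
    ν ((w j * s + ·) ⁻¹' S) ≤
      ENNReal.ofReal (Real.exp ε) * ν ((w j * t + ·) ⁻¹' S) + ENNReal.ofReal δ := by
  classical
  have hsum (r : ℝ) : ∑ i, w i * (Pi.single j r : ι → ℝ) i = w j * r := by
    simp [Pi.single_apply]
  have hnb : Neighboring (Pi.single j s : ι → ℝ) (Pi.single j t) := by
    have hcoord (i : ι) : |(Pi.single j s : ι → ℝ) i - (Pi.single j t : ι → ℝ) i| =
        (Pi.single j |s - t| : ι → ℝ) i := by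
      by_cases h : i = j <;> simp [h]
    simpa [Neighboring, hcoord] using hst
  simpa [Measure.map_apply (measurable_const_add _) hS, hsum] using
    hDP _ _ hnb S hS

lemma measureReal_le_of_le_ofReal_mul_add {ν : Measure ℝ} [IsFiniteMeasure ν] {A B : Set ℝ}
    {E d : ℝ} (hE : 0 ≤ E) (hd : 0 ≤ d)
    (h : ν A ≤ ENNReal.ofReal E * ν B + ENNReal.ofReal d) :
    ν.real A ≤ E * ν.real B + d := by
  refine ENNReal.toReal_le_of_le_ofReal (by positivity) (h.trans_eq ?_)
  rw [ENNReal.ofReal_add (by positivity) hd, ENNReal.ofReal_mul hE, measureReal_def,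
    ENNReal.ofReal_toReal (measure_ne_top _ _)]

lemma mul_div_two_le_sqrt_of_sq_mul_le {x L T s : ℝ} (hx : x ≤ 1) (hL : 0 ≤ L) (hLT : L ≤ T)
    (h : T ^ 2 * x ≤ 3 * s) : x * L / 2 ≤ √s := by
  rcases le_or_gt x 0 with hx0 | hx0
  · exact (div_nonpos_of_nonpos_of_nonneg (mul_nonpos_of_nonpos_of_nonneg hx0 hL)
      zero_le_two).trans (Real.sqrt_nonneg s)
  · refine Real.le_sqrt_of_sq_le ?_
    have hLT2 : L ^ 2 ≤ T ^ 2 := pow_le_pow_left₀ hL hLT 2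
    nlinarith [mul_le_mul_of_nonneg_left hLT2 hx0.le, mul_le_mul_of_nonneg_left hx (sq_nonneg L)]

section ShiftedNoise

variable {ν : Measure ℝ} [IsProbabilityMeasure ν] {a ε δ : ℝ}

lemma sq_mul_one_sub_le_three_mul_integral_sq (hint : Integrable (fun z => z ^ 2) ν)
    (hε : 0 < ε) (hε2 : ε ≤ 1 / 2) (hδ : 0 ≤ δ)
    (hshift : ∀ t : ℕ, ∀ S : Set ℝ, MeasurableSet S →
      ν ((a * t + ·) ⁻¹' S) ≤
        ENNReal.ofReal (Real.exp ε) * ν ((a * (t + 1 : ℕ) + ·) ⁻¹' S) + ENNReal.ofReal δ) :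
    (|a| * ⌊1 / (2 * ε)⌋₊ / 2) ^ 2 * (1 - (Real.exp (1 / 2) - 1) * δ / (Real.exp ε - 1)) ≤
      3 * ∫ z, z ^ 2 ∂ν := by
  set k := ⌊1 / (2 * ε)⌋₊
  set T := |a| * k / 2
  have hT : 0 ≤ T := by positivity
  set q : ℕ → ℝ := fun t => ν.real ((a * t + ·) ⁻¹' Set.Icc (-T) T)
  have hgroup : q 0 ≤ Real.exp ε ^ k * q k + (∑ i ∈ range k, Real.exp ε ^ i) * δ :=
    le_pow_mul_add_geom_sum_mul (Real.exp_pos ε).le (fun t => measureReal_le_of_le_ofReal_mul_add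
      (Real.exp_pos ε).le hδ (hshift t _ measurableSet_Icc)) k
  have hq0 : T ^ 2 * (1 - q 0) ≤ ∫ z, z ^ 2 ∂ν := by
    have hcompl : 1 - q 0 = ν.real (Set.Icc (-T) T)ᶜ := by
      simp [q, probReal_compl_eq_one_sub measurableSet_Icc]
    rw [hcompl]
    refine sq_mul_measureReal_le_integral_sq hint hT fun z hz => ?_
    simp only [Set.mem_compl_iff, Set.mem_Icc, not_and_or, not_le] at hz
    exact le_abs.mpr (hz.symm.imp le_of_lt fun h => by linarith)
  -- the translated window sits at distance `|a| k - T = T` from the origin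
  have hqk : T ^ 2 * q k ≤ ∫ z, z ^ 2 ∂ν := by
    refine sq_mul_measureReal_le_integral_sq hint hT fun z hz => ?_
    have hwindow : |a * k + z| ≤ T := abs_le.mpr hz
    have hshifted : |a * k| = 2 * T := by simp [T, abs_mul]; ring
    have htri : |a * k| ≤ |a * k + z| + |z| := by simpa using abs_sub (a * k + z) z
    show T ≤ |z|
    linarith
  have hpow : Real.exp ε ^ k ≤ 2 := by
    rw [← Real.exp_nat_mul]
    calc Real.exp (k * ε) ≤ Real.exp (1 / 2) :=
          Real.exp_le_exp.mpr (Nat.floor_inv_two_mul_mul_le hε)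
      _ ≤ 2 := by
        nlinarith [Real.exp_one_lt_d9, Real.exp_pos (1 / 2), Real.exp_add (1 / 2) (1 / 2)]
  have hgeom : (∑ i ∈ range k, Real.exp ε ^ i) * δ ≤
      (Real.exp (1 / 2) - 1) * δ / (Real.exp ε - 1) := by
    have := geom_sum_exp_le_of_mul_le hε (Nat.floor_inv_two_mul_mul_le hε)
    calc (∑ i ∈ range k, Real.exp ε ^ i) * δ
        ≤ (Real.exp (1 / 2) - 1) / (Real.exp ε - 1) * δ := by gcongr
      _ = _ := by ring
  have hqk0 : 0 ≤ q k := measureReal_nonneg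
  nlinarith [mul_le_mul_of_nonneg_left hpow hqk0]

lemma one_sub_mul_abs_div_le_sqrt_integral_sq (hint : Integrable (fun z => z ^ 2) ν)
    (hε : 0 < ε) (hε2 : ε ≤ 1 / 2) (hδ : 0 ≤ δ)
    (hshift : ∀ t : ℕ, ∀ S : Set ℝ, MeasurableSet S →
      ν ((a * t + ·) ⁻¹' S) ≤
        ENNReal.ofReal (Real.exp ε) * ν ((a * (t + 1 : ℕ) + ·) ⁻¹' S) + ENNReal.ofReal δ) :
    (1 - (Real.exp (1 / 2) - 1) * δ / (Real.exp ε - 1)) * |a| / (16 * ε) ≤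
      √(∫ z, z ^ 2 ∂ν) := by
  have hδ' : 0 ≤ (Real.exp (1 / 2) - 1) * δ / (Real.exp ε - 1) := by
    have := Real.one_lt_exp_iff.mpr hε
    have := Real.one_le_exp (x := 1 / 2) (by norm_num)
    exact div_nonneg (mul_nonneg (by linarith) hδ) (by linarith)
  have hk : |a| / (8 * ε) ≤ |a| * ⌊1 / (2 * ε)⌋₊ / 2 := by
    have := Nat.div_four_le_floor_inv_two_mul hε hε2
    calc |a| / (8 * ε) = |a| * (1 / (4 * ε)) / 2 := by field_simp; ring
      _ ≤ _ := by gcongr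
  rw [show ∀ x, x * |a| / (16 * ε) = x * (|a| / (8 * ε)) / 2 from fun x => by field_simp; ring]
  exact mul_div_two_le_sqrt_of_sq_mul_le (by linarith) (by positivity) hk
    (sq_mul_one_sub_le_three_mul_integral_sq hint hε hε2 hδ hshift)

end ShiftedNoise

/-- a one-dimensional (ε,δ)-DP additive noise mechanism for a single
  linear query w must have noise second moment ≳ ((1-δ')‖w‖_∞/ε)². -/
theorem one_dim_additive_noise_lower_bound :
    ∃ C : ℝ, 0 < C ∧
      ∀ (n : ℕ) (w : Fin n → ℝ) (ν : Measure ℝ), IsProbabilityMeasure ν →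
        Integrable (fun z => z ^ 2) ν →
        ∀ ε δ : ℝ, 0 < ε → ε ≤ 1 / 2 → 0 ≤ δ → δ ≤ 1 →
        IsDP (fun x : Fin n → ℝ => Measure.map (fun z => (∑ i, w i * x i) + z) ν) ε δ →
        Real.sqrt (∫ z, z ^ 2 ∂ν) ≥
          (1 - (Real.exp (1 / 2) - 1) * δ / (Real.exp ε - 1)) * (⨆ i, |w i|) / (C * ε) := by
  refine ⟨16, by norm_num, fun n w ν _ hint ε δ hε hε2 hδ _ hDP => ?_⟩
  rcases isEmpty_or_nonempty (Fin n) with hn | hn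
  · simp [Real.iSup_of_isEmpty]
  obtain ⟨j, hj⟩ := exists_eq_ciSup_of_finite (f := fun i => |w i|)
  rw [← hj]
  exact one_sub_mul_abs_div_le_sqrt_integral_sq hint hε hε2 hδ fun t S hS =>
    hDP.measure_preimage_add_le j (by simp) hS
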